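/- Fix a target error probability ε̄ ∈ (0, 1/2] and a blocklength m > 0 with √m ≥ Q⁻¹(ε̄). Then the finite-blocklength coding rate γ ↦ r(m,γ) is concave on [1,∞). -/

import Mathlib

open Real MeasureTheory

/-- The Gaussian Q-function `Q(x) = ∫ₓ^∞ (1/√(2π)) e^{−t²/2} dt`. -/
noncomputable def Qfun (x : ℝ) : ℝ :=
  ∫ t in Set.Ioi x, Real.exp (-t ^ 2 / 2) / Real.sqrt (2 * Real.pi)

/-- Shannon capacity `C(γ) = log₂(1+γ)`. -/
noncomputable def Cap (γ : ℝ) : ℝ := Real.logb 2 (1 + γ)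

/-- Channel dispersion `V(γ) = 1 − (1+γ)⁻²`. -/
noncomputable def Vdisp (γ : ℝ) : ℝ := 1 - ((1 + γ) ^ 2)⁻¹

/-- Finite-blocklength coding rate `r(m,γ) = C(γ) − √(V(γ)/m)·q`, where
`q = Q⁻¹(ε̄)` is the inverse Q-function of the target error probability. -/
noncomputable def rate (q m γ : ℝ) : ℝ := Cap γ - Real.sqrt (Vdisp γ / m) * q

section Aux

open Set

lemma gauss_integrable : Integrable (fun t : ℝ => Real.exp (-t ^ 2 / 2) / Real.sqrt (2 * Real.pi)) := by
  have h : Integrable (fun t : ℝ => Real.exp (-(1/2) * t ^ 2)) := integrable_exp_neg_mul_sq (by norm_num)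
  have := h.div_const (Real.sqrt (2 * Real.pi))
  convert this using 2 with t
  ring_nf

lemma Qfun_zero : Qfun 0 = 1 / 2 := by
  have h2π : Real.sqrt (2 * Real.pi) ≠ 0 := by
    positivity
  have h : ∫ t in Set.Ioi (0:ℝ), Real.exp (-(1/2) * t ^ 2) = Real.sqrt (π / (1/2)) / 2 :=
    integral_gaussian_Ioi (1/2)
  have heq : (fun t : ℝ => Real.exp (-t ^ 2 / 2) / Real.sqrt (2 * Real.pi))
      = fun t : ℝ => Real.exp (-(1/2) * t ^ 2) / Real.sqrt (2 * Real.pi) := by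
    funext t; ring_nf
  rw [Qfun, heq, integral_div, h]
  rw [show π / (1/2) = 2 * π by ring]
  field_simp

lemma q_nonneg {q ε : ℝ} (hε : ε ∈ Set.Ioc (0 : ℝ) (1 / 2)) (hq : Qfun q = ε) : 0 ≤ q := by
  by_contra hlt
  push_neg at hlt
  have hsplit : Qfun q = (∫ t in Set.Ioc q 0, Real.exp (-t ^ 2 / 2) / Real.sqrt (2 * Real.pi))
      + Qfun 0 := by
    rw [Qfun, Qfun, ← setIntegral_union]
    · rw [Set.Ioc_union_Ioi_eq_Ioi hlt.le]
    · exact Set.Ioc_disjoint_Ioi le_rfl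
    · exact measurableSet_Ioi
    · exact gauss_integrable.integrableOn
    · exact gauss_integrable.integrableOn
  have hpos : 0 < ∫ t in Set.Ioc q 0, Real.exp (-t ^ 2 / 2) / Real.sqrt (2 * Real.pi) := by
    rw [← intervalIntegral.integral_of_le hlt.le]
    apply intervalIntegral.intervalIntegral_pos_of_pos_on
    · exact gauss_integrable.intervalIntegrable
    · intro x _; positivity
    · exact hlt
  have : (1:ℝ)/2 < Qfun q := by rw [hsplit, Qfun_zero]; linarith
  rw [hq] at this
  linarith [hε.2]


noncomputable def fblF (c γ : ℝ) : ℝ := Cap γ - c * Real.sqrt (Vdisp γ)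
noncomputable def fblF1 (c γ : ℝ) : ℝ :=
  ((1 + γ) * Real.log 2)⁻¹ - c * ((1 + γ) ^ 3 * Real.sqrt (Vdisp γ))⁻¹
noncomputable def fblF2 (c γ : ℝ) : ℝ :=
  -((1 + γ) ^ 2 * Real.log 2)⁻¹
    + c * (3 * (1 + γ) ^ 2 - 2) * ((1 + γ) ^ 6 * Vdisp γ * Real.sqrt (Vdisp γ))⁻¹

lemma Vdisp_pos {x : ℝ} (hx : (1:ℝ) ≤ x) : 0 < Vdisp x := by
  have h : (2:ℝ) ≤ 1 + x := by linarith
  have h4 : (4:ℝ) ≤ (1+x)^2 := by nlinarith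
  have : ((1+x)^2)⁻¹ ≤ (4:ℝ)⁻¹ := by
    apply inv_anti₀ <;> norm_num <;> linarith
  unfold Vdisp; linarith

lemma hasDerivAt_Vdisp {x : ℝ} (hx : (1:ℝ) ≤ x) :
    HasDerivAt Vdisp (2 / (1 + x) ^ 3) x := by
  have h0 : (1 + x) ≠ 0 := by positivity
  have h1 : HasDerivAt (fun γ : ℝ => 1 + γ) 1 x := (hasDerivAt_id x).const_add 1
  have h2 : HasDerivAt (fun γ : ℝ => (1 + γ) ^ 2) (2 * (1 + x)) x := by
    simpa using h1.fun_pow 2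
  have h3 := (h2.inv (pow_ne_zero 2 h0)).const_sub 1
  refine h3.congr_deriv ?_
  field_simp

lemma hasDerivAt_sqrtV {x : ℝ} (hx : (1:ℝ) ≤ x) :
    HasDerivAt (fun γ => Real.sqrt (Vdisp γ)) (((1 + x) ^ 3 * Real.sqrt (Vdisp x))⁻¹) x := by
  have hV := Vdisp_pos hx
  have h := (hasDerivAt_Vdisp hx).sqrt hV.ne'
  convert h using 1
  have h0 : (1 + x) ≠ 0 := by positivity
  have hs : Real.sqrt (Vdisp x) ≠ 0 := by positivity
  field_simp

lemma hasDerivAt_fblF {c x : ℝ} (hx : (1:ℝ) ≤ x) :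
    HasDerivAt (fblF c) (fblF1 c x) x := by
  have h0 : (0:ℝ) < 1 + x := by linarith
  have h1 : HasDerivAt (fun γ : ℝ => 1 + γ) 1 x := (hasDerivAt_id x).const_add 1
  have hlog : HasDerivAt (fun γ : ℝ => Real.log (1 + γ)) ((1 + x))⁻¹ x := by
    simpa using h1.log h0.ne'
  have hcap : HasDerivAt Cap (((1 + x) * Real.log 2)⁻¹) x := by
    have := hlog.div_const (Real.log 2)
    have heq : Cap = fun γ : ℝ => Real.log (1 + γ) / Real.log 2 := by
      funext γ; simp [Cap, Real.logb]
    rw [heq]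
    refine this.congr_deriv ?_
    rw [mul_inv, div_eq_mul_inv]
  exact hcap.sub (((hasDerivAt_sqrtV hx).const_mul c))

lemma hasDerivAt_fblF1 {c x : ℝ} (hx : (1:ℝ) ≤ x) :
    HasDerivAt (fblF1 c) (fblF2 c x) x := by
  have h0 : (0:ℝ) < 1 + x := by linarith
  have hV := Vdisp_pos hx
  have hs : (0:ℝ) < Real.sqrt (Vdisp x) := Real.sqrt_pos.2 hV
  have hL : Real.log 2 ≠ 0 := by
    have := Real.log_pos (by norm_num : (1:ℝ) < 2); linarith
  have h1 : HasDerivAt (fun γ : ℝ => 1 + γ) 1 x := (hasDerivAt_id x).const_add 1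
  -- first term
  have ha : HasDerivAt (fun γ : ℝ => ((1 + γ) * Real.log 2)⁻¹)
      (-(Real.log 2) / ((1 + x) * Real.log 2) ^ 2) x := by
    have := (h1.mul_const (Real.log 2)).inv (by positivity : (1 + x) * Real.log 2 ≠ 0)
    exact this.congr_deriv (by simp)
  -- product p = (1+γ)^3 * sqrt V
  have hp3 : HasDerivAt (fun γ : ℝ => (1 + γ) ^ 3) (3 * (1 + x) ^ 2) x := by
    simpa using h1.fun_pow 3
  have hp : HasDerivAt (fun γ : ℝ => (1 + γ) ^ 3 * Real.sqrt (Vdisp γ))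
      (3 * (1 + x) ^ 2 * Real.sqrt (Vdisp x)
        + (1 + x) ^ 3 * (((1 + x) ^ 3 * Real.sqrt (Vdisp x))⁻¹)) x :=
    hp3.mul (hasDerivAt_sqrtV hx)
  have hpne : (1 + x) ^ 3 * Real.sqrt (Vdisp x) ≠ 0 := by positivity
  have hb := (hp.inv hpne).const_mul c
  have hfull := ha.sub hb
  refine hfull.congr_deriv ?_
  unfold fblF2
  have hss : Real.sqrt (Vdisp x) * Real.sqrt (Vdisp x) = Vdisp x := Real.mul_self_sqrt hV.le
  set s := Real.sqrt (Vdisp x) with hsdef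
  have hx2 : s * s = 1 - ((1 + x) ^ 2)⁻¹ := by rw [hss]; rfl
  have hVs : Vdisp x = s * s := hss.symm
  rw [hVs]
  have key : 3 * (1 + x) ^ 2 - 2 = 3 * (1 + x) ^ 2 * (s * s) + 1 := by
    rw [hx2]; field_simp; ring
  rw [key]
  have hsne : s ≠ 0 := ne_of_gt hs
  have h0' : (1 + x) ≠ 0 := ne_of_gt h0
  field_simp
  ring

lemma fblF2_nonpos {c x : ℝ} (hc0 : 0 ≤ c) (hc1 : c ≤ 1) (hx : (1:ℝ) ≤ x) :
    fblF2 c x ≤ 0 := by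
  have h0 : (2:ℝ) ≤ 1 + x := by linarith
  have hu : (0:ℝ) < 1 + x := by linarith
  have hu2 : (4:ℝ) ≤ (1 + x) ^ 2 := by nlinarith
  have hV := Vdisp_pos hx
  have hV34 : (3:ℝ)/4 ≤ Vdisp x := by
    have hinv : ((1 + x) ^ 2)⁻¹ ≤ (4:ℝ)⁻¹ := inv_anti₀ (by norm_num) hu2
    unfold Vdisp; linarith
  have hs : 0 < Real.sqrt (Vdisp x) := Real.sqrt_pos.2 hV
  have hss : Real.sqrt (Vdisp x) * Real.sqrt (Vdisp x) = Vdisp x := Real.mul_self_sqrt hV.le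
  have hs86 : (0.86:ℝ) ≤ Real.sqrt (Vdisp x) := by nlinarith
  have hLpos : (0:ℝ) < Real.log 2 := Real.log_pos (by norm_num)
  have hLle : Real.log 2 ≤ 0.6931471808 := Real.log_two_lt_d9.le
  unfold fblF2
  have hkey : c * (3 * (1 + x) ^ 2 - 2) * ((1 + x) ^ 2 * Real.log 2)
      ≤ (1 + x) ^ 6 * Vdisp x * Real.sqrt (Vdisp x) := by
    have hD : (0:ℝ) ≤ (1 + x) ^ 2 * Real.log 2 := by positivity
    have hA : (0:ℝ) ≤ 3 * (1 + x) ^ 2 - 2 := by nlinarith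
    have e1 : c * (3 * (1 + x) ^ 2 - 2) ≤ 1 * (3 * (1 + x) ^ 2 - 2) :=
      mul_le_mul_of_nonneg_right hc1 hA
    have h1 : c * (3 * (1 + x) ^ 2 - 2) * ((1 + x) ^ 2 * Real.log 2)
        ≤ 3 * Real.log 2 * ((1 + x) ^ 2) ^ 2 := by
      have e2 : c * (3 * (1 + x) ^ 2 - 2) * ((1 + x) ^ 2 * Real.log 2)
          ≤ (3 * (1 + x) ^ 2 - 2) * ((1 + x) ^ 2 * Real.log 2) := by
        have := mul_le_mul_of_nonneg_right e1 hD
        linarith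
      nlinarith [mul_nonneg (by norm_num : (0:ℝ) ≤ 2) hD]
    have h2 : (2.58:ℝ) * ((1 + x) ^ 2) ^ 2 ≤ (1 + x) ^ 6 * Vdisp x * Real.sqrt (Vdisp x) := by
      have hVs : (0.645:ℝ) ≤ Vdisp x * Real.sqrt (Vdisp x) := by nlinarith
      have hin : (2.58:ℝ) ≤ (1 + x) ^ 2 * (Vdisp x * Real.sqrt (Vdisp x)) := by nlinarith
      have h6 : (1 + x) ^ 6 * Vdisp x * Real.sqrt (Vdisp x)
          = ((1 + x) ^ 2) ^ 2 * ((1 + x) ^ 2 * (Vdisp x * Real.sqrt (Vdisp x))) := by ring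
      rw [h6]
      have hp : (0:ℝ) < ((1 + x) ^ 2) ^ 2 := by positivity
      nlinarith
    nlinarith [sq_nonneg ((1 + x) ^ 2)]
  have hd1 : (0:ℝ) < (1 + x) ^ 2 * Real.log 2 := by positivity
  have hd2 : (0:ℝ) < (1 + x) ^ 6 * Vdisp x * Real.sqrt (Vdisp x) := by positivity
  have hmain : c * (3 * (1 + x) ^ 2 - 2) * ((1 + x) ^ 6 * Vdisp x * Real.sqrt (Vdisp x))⁻¹
      ≤ ((1 + x) ^ 2 * Real.log 2)⁻¹ := by
    rw [← div_eq_mul_inv, div_le_iff₀ hd2, inv_mul_eq_div, le_div_iff₀ hd1]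
    exact hkey
  linarith

lemma fblF_concaveOn {c : ℝ} (hc0 : 0 ≤ c) (hc1 : c ≤ 1) :
    ConcaveOn ℝ (Set.Ici 1) (fblF c) := by
  have hInt : interior (Set.Ici (1:ℝ)) = Set.Ioi 1 := interior_Ici
  have hev : ∀ x : ℝ, x ∈ Set.Ioi (1:ℝ) → deriv (fblF c) =ᶠ[nhds x] fblF1 c := by
    intro x hx
    filter_upwards [Ioi_mem_nhds hx] with y hy
    exact (hasDerivAt_fblF (le_of_lt hy)).deriv
  apply concaveOn_of_deriv2_nonpos (convex_Ici 1)
  · intro x hx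
    exact (hasDerivAt_fblF hx).continuousAt.continuousWithinAt
  · intro x hx
    rw [hInt] at hx
    exact (hasDerivAt_fblF (le_of_lt hx)).differentiableAt.differentiableWithinAt
  · intro x hx
    rw [hInt] at hx
    have := ((hev x hx).differentiableAt_iff).2 (hasDerivAt_fblF1 (le_of_lt hx)).differentiableAt
    exact this.differentiableWithinAt
  · intro x hx
    rw [hInt] at hx
    have h2 : deriv^[2] (fblF c) x = deriv (deriv (fblF c)) x := by
      simp [Function.iterate_succ, Function.comp]
    rw [h2, (hev x hx).deriv_eq, (hasDerivAt_fblF1 (le_of_lt hx)).deriv]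
    exact fblF2_nonpos hc0 hc1 (le_of_lt hx)


end Aux

/-- For a target error probability `ε̄ ∈ (0,1/2]` with `q = Q⁻¹(ε̄)` and a blocklength
`m > 0` with `√m ≥ q`, the FBL coding rate `γ ↦ r(m,γ)` is concave on `[1,∞)`. -/
theorem rate_concaveOn_snr (m ε q : ℝ) (hm : 0 < m)
    (hε : ε ∈ Set.Ioc (0 : ℝ) (1 / 2)) (hq : Qfun q = ε) (hmq : q ≤ Real.sqrt m) :
    ConcaveOn ℝ (Set.Ici 1) (fun γ => rate q m γ) := by
  have hq0 : 0 ≤ q := q_nonneg hε hq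
  have hsm : 0 < Real.sqrt m := Real.sqrt_pos.2 hm
  set c : ℝ := q / Real.sqrt m with hc
  have hc0 : 0 ≤ c := div_nonneg hq0 hsm.le
  have hc1 : c ≤ 1 := (div_le_one hsm).2 hmq
  have heq : (fun γ => rate q m γ) = fblF c := by
    funext γ
    unfold rate fblF
    congr 1
    rw [div_eq_mul_inv, Real.sqrt_mul' _ (inv_nonneg.2 hm.le), Real.sqrt_inv, hc,
      div_eq_mul_inv]
    ring
  rw [heq]
  exact fblF_concaveOn hc0 hc1
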